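/- arXiv:2406.11011 — 3 statements merged into one kernel-verified Lean document; each statement's English description precedes it below -/
import Mathlib

section
/- Let D be a finite set of N players, let T ≥ 1, and for each iteration t = 0, …, T−1 let B_t ⊆ D be a batch, η_t ∈ ℝ a learning rate, g_t : D → ℝ^d an assignment of (training-gradient) vectors, and g_t^val ∈ ℝ^d a (validation-gradient) vector. Define the first-order local utility U_{(1)}^{(t)}(S) := −η_t Σ_{z ∈ S ∩ B_t} ⟨g_t^val, g_t(z)⟩ for S ⊆ D, and the global utility U := Σ_{t=0}^{T−1} U_{(1)}^{(t)}. Then for every z ∈ D, the Shapley value of z satisfies φ_z(U) = Σ_{t : z ∈ B_t} ( −η_t ⟨g_t^val, g_t(z)⟩ ). -/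
open Finset

/-- The Shapley value of player `z` in the game with finite player set `D` and
utility function `U`:
`φ_z(U) = (1/N) Σ_{k=1}^{N} C(N−1, k−1)⁻¹ Σ_{S ⊆ D∖{z}, |S| = k−1} [U(S ∪ {z}) − U(S)]`. -/
noncomputable def shapley {α : Type*} [DecidableEq α]
    (D : Finset α) (U : Finset α → ℝ) (z : α) : ℝ :=
  ((D.card : ℝ))⁻¹ * ∑ k ∈ Finset.Icc 1 D.card,
    (((D.card - 1).choose (k - 1) : ℝ))⁻¹ *
      ∑ S ∈ (D \ {z}).powersetCard (k - 1), (U (S ∪ {z}) - U S)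

/-- **First-order In-Run Data Shapley** (Theorem 4.1).
For the global utility `U = Σ_{t=0}^{T−1} U_{(1)}^{(t)}` with first-order local
utilities `U_{(1)}^{(t)}(S) = −η_t Σ_{x ∈ S ∩ B_t} ⟨g_t^val, g_t(x)⟩`, the Shapley value
of any player `z ∈ D` is `Σ_{t : z ∈ B_t} (−η_t ⟨g_t^val, g_t(z)⟩)`. -/
theorem firstOrder_inRun_data_shapley {α : Type*} [DecidableEq α]
    (D : Finset α) (T : ℕ) (hT : 1 ≤ T)
    (B : ℕ → Finset α) (hB : ∀ t < T, B t ⊆ D)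
    (η : ℕ → ℝ) (d : ℕ)
    (g : ℕ → α → Fin d → ℝ) (gval : ℕ → Fin d → ℝ)
    (z : α) (hz : z ∈ D) :
    shapley D
      (fun S => ∑ t ∈ Finset.range T,
        (-(η t) * ∑ x ∈ S ∩ B t, ∑ i, gval t i * g t x i)) z
    = ∑ t ∈ (Finset.range T).filter (fun t => z ∈ B t),
        (-(η t) * ∑ i, gval t i * g t z i) := by
  set c : ℝ := ∑ t ∈ (Finset.range T).filter (fun t => z ∈ B t),
      (-(η t) * ∑ i, gval t i * g t z i) with hc
  have key : ∀ S : Finset α, z ∉ S →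
      (∑ t ∈ Finset.range T,
        (-(η t) * ∑ x ∈ (S ∪ {z}) ∩ B t, ∑ i, gval t i * g t x i))
      - (∑ t ∈ Finset.range T,
        (-(η t) * ∑ x ∈ S ∩ B t, ∑ i, gval t i * g t x i)) = c := by
    intro S hS
    rw [← Finset.sum_sub_distrib, hc, Finset.sum_filter]
    refine Finset.sum_congr rfl fun t _ => ?_
    by_cases h : z ∈ B t
    · have hset : (S ∪ {z}) ∩ B t = insert z (S ∩ B t) := by
        ext x
        simp only [Finset.mem_inter, Finset.mem_union, Finset.mem_singleton,
          Finset.mem_insert]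
        constructor
        · rintro ⟨hx | hx, hb⟩
          · exact Or.inr ⟨hx, hb⟩
          · exact Or.inl hx
        · rintro (rfl | ⟨hx, hb⟩)
          · exact ⟨Or.inr rfl, h⟩
          · exact ⟨Or.inl hx, hb⟩
      rw [hset, Finset.sum_insert (by simp [hS]), if_pos h]
      ring
    · have hset : (S ∪ {z}) ∩ B t = S ∩ B t := by
        ext x
        simp only [Finset.mem_inter, Finset.mem_union, Finset.mem_singleton]
        constructor
        · rintro ⟨hx | rfl, hb⟩
          · exact ⟨hx, hb⟩
          · exact absurd hb h
        · rintro ⟨hx, hb⟩; exact ⟨Or.inl hx, hb⟩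
      rw [hset, if_neg h]
      ring
  have hN : 1 ≤ D.card := Finset.card_pos.mpr ⟨z, hz⟩
  have hcard : (D \ {z}).card = D.card - 1 := by
    rw [Finset.card_sdiff_of_subset (by simpa using hz)]; simp
  unfold shapley
  have h1 : ∀ k ∈ Finset.Icc 1 D.card,
      (((D.card - 1).choose (k - 1) : ℝ))⁻¹ *
        ∑ S ∈ (D \ {z}).powersetCard (k - 1),
          ((∑ t ∈ Finset.range T,
            (-(η t) * ∑ x ∈ (S ∪ {z}) ∩ B t, ∑ i, gval t i * g t x i))
          - (∑ t ∈ Finset.range T,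
            (-(η t) * ∑ x ∈ S ∩ B t, ∑ i, gval t i * g t x i))) = c := by
    intro k hk
    rw [Finset.mem_Icc] at hk
    have hsum : ∑ S ∈ (D \ {z}).powersetCard (k - 1),
        ((∑ t ∈ Finset.range T,
            (-(η t) * ∑ x ∈ (S ∪ {z}) ∩ B t, ∑ i, gval t i * g t x i))
          - (∑ t ∈ Finset.range T,
            (-(η t) * ∑ x ∈ S ∩ B t, ∑ i, gval t i * g t x i)))
        = ((D.card - 1).choose (k - 1) : ℝ) * c := by
      rw [Finset.sum_congr rfl (fun S hS => key S (by
        rw [Finset.mem_powersetCard] at hS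
        intro hzS
        have := hS.1 hzS
        simp at this))]
      rw [Finset.sum_const, Finset.card_powersetCard, hcard, nsmul_eq_mul]
    rw [hsum, ← mul_assoc, inv_mul_cancel₀, one_mul]
    · exact Nat.cast_ne_zero.mpr (Nat.choose_pos (by omega : k - 1 ≤ D.card - 1)).ne'
  rw [Finset.sum_congr rfl h1, Finset.sum_const, Nat.card_Icc, Nat.add_sub_cancel,
    nsmul_eq_mul, ← mul_assoc,
    inv_mul_cancel₀ (Nat.cast_ne_zero.mpr (by omega : D.card ≠ 0)), one_mul]
end

section
/- Let D be a finite set of N players, let T ≥ 1, and for each iteration t = 0, …, T−1 let B_t ⊆ D be a batch, η_t ∈ ℝ a learning rate, g_t : D → ℝ^d an assignment of vectors, g_t^val ∈ ℝ^d a vector, and H_t a symmetric d×d real matrix. Define the local utility U^{(t)}(S) := −η_t Σ_{z ∈ S ∩ B_t} ⟨g_t^val, g_t(z)⟩ + (η_t²/2) (Σ_{z ∈ S ∩ B_t} g_t(z))ᵀ H_t (Σ_{z ∈ S ∩ B_t} g_t(z)) for S ⊆ D, and U := Σ_{t=0}^{T−1} U^{(t)}. Then for every z ∈ D, the Shapley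 value satisfies φ_z(U) = Σ_{t : z ∈ B_t} [ −η_t ⟨g_t^val, g_t(z)⟩ + (η_t²/2) g_t(z)ᵀ H_t ( Σ_{z_j ∈ B_t} g_t(z_j) ) ]. -/
open Finset

lemma count_lemma {α : Type*} [DecidableEq α] (F : Finset α) (x : α) (hx : x ∈ F) (m : ℕ) :
    ((F.powersetCard (m+1)).filter (fun S => x ∈ S)).card = (F.card - 1).choose m := by
  rw [← Finset.card_erase_of_mem hx, ← Finset.card_powersetCard]
  apply Finset.card_bij' (fun S _ => S.erase x) (fun S _ => insert x S)
  · intro S hS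
    simp only [mem_filter] at hS
    exact Finset.insert_erase hS.2
  · intro S hS
    rw [mem_powersetCard] at hS
    have hxS : x ∉ S := fun h => (mem_erase.1 (hS.1 h)).1 rfl
    exact Finset.erase_insert hxS
  · intro S hS
    simp only [mem_filter, mem_powersetCard] at hS
    rw [mem_powersetCard]
    refine ⟨fun y hy => ?_, ?_⟩
    · rw [mem_erase] at hy ⊢; exact ⟨hy.1, hS.1.1 hy.2⟩
    · rw [Finset.card_erase_of_mem hS.2, hS.1.2]; rfl
  · intro S hS
    rw [mem_powersetCard] at hS
    have hxS : x ∉ S := fun h => (mem_erase.1 (hS.1 h)).1 rfl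
    simp only [mem_filter, mem_powersetCard]
    refine ⟨⟨fun y hy => ?_, ?_⟩, mem_insert_self x S⟩
    · rcases mem_insert.1 hy with rfl | h
      · exact hx
      · exact (mem_erase.1 (hS.1 h)).2
    · rw [Finset.card_insert_of_notMem hxS, hS.2]

lemma sum_powersetCard_sum {α : Type*} [DecidableEq α] (F : Finset α) (f : α → ℝ) (m : ℕ) :
    ∑ S ∈ F.powersetCard (m+1), ∑ x ∈ S, f x
      = ((F.card - 1).choose m : ℝ) * ∑ x ∈ F, f x := by
  have h1 : ∀ S ∈ F.powersetCard (m+1), ∑ x ∈ S, f x = ∑ x ∈ F, if x ∈ S then f x else 0 := by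
    intro S hS
    rw [Finset.sum_ite_mem, Finset.inter_eq_right.2 (mem_powersetCard.1 hS).1]
  rw [Finset.sum_congr rfl h1, Finset.sum_comm, Finset.mul_sum]
  refine Finset.sum_congr rfl fun x hx => ?_
  rw [← Finset.sum_filter, Finset.sum_const, count_lemma F x hx m]
  simp [mul_comm]


lemma BL_sum {β : Type*} (d : ℕ) (Hm : Matrix (Fin d) (Fin d) ℝ) (v : Fin d → ℝ)
    (s : Finset β) (w : β → Fin d → ℝ) :
    ∑ j, ∑ k, v j * Hm j k * (∑ x ∈ s, w x k)
      = ∑ x ∈ s, ∑ j, ∑ k, v j * Hm j k * w x k := by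
  simp_rw [Finset.mul_sum]
  rw [show (∑ j, ∑ k, ∑ x ∈ s, v j * Hm j k * w x k)
      = ∑ j, ∑ x ∈ s, ∑ k, v j * Hm j k * w x k from
    Finset.sum_congr rfl fun j _ => Finset.sum_comm]
  exact Finset.sum_comm

lemma BL_symm (d : ℕ) (Hm : Matrix (Fin d) (Fin d) ℝ) (h : Hm.IsSymm) (u w : Fin d → ℝ) :
    ∑ j, ∑ k, u j * Hm j k * w k = ∑ j, ∑ k, w j * Hm j k * u k := by
  rw [Finset.sum_comm]
  refine Finset.sum_congr rfl fun j _ => Finset.sum_congr rfl fun k _ => ?_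
  rw [show Hm k j = Hm j k from (h.apply j k)]
  ring

lemma quad_expand (d : ℕ) (Hm : Matrix (Fin d) (Fin d) ℝ) (hsym : Hm.IsSymm)
    (v a : Fin d → ℝ) :
    ∑ j, ∑ k, (v j + a j) * Hm j k * (v k + a k)
      = ∑ j, ∑ k, v j * Hm j k * v k + 2 * ∑ j, ∑ k, v j * Hm j k * a k
          + ∑ j, ∑ k, a j * Hm j k * a k := by
  have h1 : ∀ j : Fin d, ∑ k, (v j + a j) * Hm j k * (v k + a k)
      = ∑ k, (v j * Hm j k * v k + v j * Hm j k * a k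
          + (a j * Hm j k * v k + a j * Hm j k * a k)) :=
    fun j => Finset.sum_congr rfl fun k _ => by ring
  simp_rw [h1, Finset.sum_add_distrib]
  rw [BL_symm d Hm hsym a v]
  ring

lemma sum_range_add_one (p : ℕ) : ∑ i ∈ range p, ((i:ℝ)+1) = p*(p+1)/2 := by
  induction p with
  | zero => simp
  | succ q ih => rw [Finset.sum_range_succ, ih]; push_cast; ring

lemma shapley_master {α : Type*} [DecidableEq α] (D : Finset α) (z : α) (hz : z ∈ D)
    (U : Finset α → ℝ) (c : ℝ) (f : α → ℝ)
    (hmarg : ∀ S ⊆ D \ {z}, U (S ∪ {z}) - U S = c + ∑ x ∈ S, f x) :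
    shapley D U z = c + (∑ x ∈ D \ {z}, f x) / 2 := by
  have hn : 1 ≤ D.card := Finset.card_pos.2 ⟨z, hz⟩
  obtain ⟨p, hp⟩ : ∃ p, D.card = p + 1 := ⟨D.card - 1, (Nat.succ_pred_eq_of_pos hn).symm⟩
  have hF : (D \ {z}).card = p := by
    rw [Finset.sdiff_singleton_eq_erase, Finset.card_erase_of_mem hz, hp]; rfl
  set F := D \ {z} with hFdef
  set Sf := ∑ x ∈ F, f x with hSf
  unfold shapley
  rw [← Finset.Ico_add_one_right_eq_Icc, Finset.sum_Ico_eq_sum_range]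
  have hred : #D + 1 - 1 = #D := rfl
  rw [hred]
  rw [hp, Finset.sum_range_succ']
  have hterm : ∀ i ∈ range p,
      ((((p+1) - 1).choose (1 + (i+1) - 1) : ℝ))⁻¹ *
        ∑ S ∈ F.powersetCard (1 + (i+1) - 1), (U (S ∪ {z}) - U S)
      = c + ((i:ℝ)+1) * (p:ℝ)⁻¹ * Sf := by
    intro i hi
    have hi' : i < p := mem_range.1 hi
    have h1 : 1 + (i+1) - 1 = i + 1 := by omega
    have h2 : (p+1) - 1 = p := rfl
    rw [h1, h2]
    have hrw : ∀ S ∈ F.powersetCard (i+1), U (S ∪ {z}) - U S = c + ∑ x ∈ S, f x :=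
      fun S hS => hmarg S (mem_powersetCard.1 hS).1
    rw [Finset.sum_congr rfl hrw, Finset.sum_add_distrib, Finset.sum_const,
      sum_powersetCard_sum, Finset.card_powersetCard, hF]
    have hch : (p.choose (i+1) : ℝ) ≠ 0 := by
      exact_mod_cast (Nat.choose_pos (by omega)).ne'
    have hkey : ((p - 1).choose i : ℝ) * p = (p.choose (i+1) : ℝ) * ((i:ℝ)+1) := by
      obtain ⟨q, hq⟩ : ∃ q, p = q + 1 := ⟨p - 1, by omega⟩
      have := Nat.add_one_mul_choose_eq q i
      have : (q+1) * q.choose i = (q+1).choose (i+1) * (i+1) := this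
      have hcast : ((q+1) * q.choose i : ℕ) = ((q+1).choose (i+1) * (i+1) : ℕ) := this
      rw [hq]
      push_cast [Nat.add_sub_cancel]
      exact_mod_cast by push_cast at hcast ⊢; linarith [hcast]
    have hp0 : (p:ℝ) ≠ 0 := Nat.cast_ne_zero.2 (by omega)
    rw [← hSf]
    field_simp
    linear_combination Sf * hkey
  rw [Finset.sum_congr rfl hterm]
  have h0 : (1 + 0 - 1) = 0 := rfl
  rw [h0]
  rw [Finset.powersetCard_zero]
  simp only [Finset.sum_singleton, Nat.choose_zero_right, Nat.cast_one, inv_one, one_mul]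
  rw [show U (∅ ∪ {z}) - U ∅ = c from by rw [hmarg ∅ (Finset.empty_subset _)]; simp]
  rw [Finset.sum_add_distrib, Finset.sum_const, ← Finset.sum_mul, ← Finset.sum_mul,
    sum_range_add_one, card_range]
  by_cases hp0 : p = 0
  · subst hp0
    have : F = ∅ := Finset.card_eq_zero.1 hF
    rw [this] at hSf
    simp [hSf, hp]
  · have hp0' : (p:ℝ) ≠ 0 := Nat.cast_ne_zero.2 hp0
    rw [nsmul_eq_mul]
    push_cast
    have h1 : ((p:ℝ)+1) ≠ 0 := by positivity
    field_simp
    ring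

/-- **Second-order In-Run Data Shapley** (Theorem 4.2).
For the global utility `U = Σ_{t=0}^{T−1} U^{(t)}` with second-order local utilities
`U^{(t)}(S) = −η_t Σ_{x ∈ S ∩ B_t} ⟨g_t^val, g_t(x)⟩
  + (η_t²/2) (Σ_{x ∈ S ∩ B_t} g_t(x))ᵀ H_t (Σ_{x ∈ S ∩ B_t} g_t(x))`,
the Shapley value of any `z ∈ D` is
`Σ_{t : z ∈ B_t} [−η_t ⟨g_t^val, g_t(z)⟩ + (η_t²/2) g_t(z)ᵀ H_t (Σ_{x ∈ B_t} g_t(x))]`. -/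
theorem secondOrder_inRun_data_shapley {α : Type*} [DecidableEq α]
    (D : Finset α) (T : ℕ) (hT : 1 ≤ T)
    (B : ℕ → Finset α) (hB : ∀ t < T, B t ⊆ D)
    (η : ℕ → ℝ) (d : ℕ)
    (g : ℕ → α → Fin d → ℝ) (gval : ℕ → Fin d → ℝ)
    (H : ℕ → Matrix (Fin d) (Fin d) ℝ) (hH : ∀ t, (H t).IsSymm)
    (z : α) (hz : z ∈ D) :
    shapley D
      (fun S => ∑ t ∈ Finset.range T,
        (-(η t) * ∑ x ∈ S ∩ B t, ∑ i, gval t i * g t x i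
          + (η t) ^ 2 / 2 *
            ∑ j, ∑ k, (∑ x ∈ S ∩ B t, g t x j) * H t j k * (∑ x ∈ S ∩ B t, g t x k))) z
    = ∑ t ∈ (Finset.range T).filter (fun t => z ∈ B t),
        (-(η t) * ∑ i, gval t i * g t z i
          + (η t) ^ 2 / 2 *
            ∑ j, ∑ k, g t z j * H t j k * (∑ x ∈ B t, g t x k)) := by
  classical
  set c : ℝ := ∑ t ∈ (range T).filter (fun t => z ∈ B t),
      (-(η t) * ∑ i, gval t i * g t z i
        + (η t)^2 / 2 * ∑ j, ∑ k, g t z j * H t j k * g t z k) with hc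
  set f : α → ℝ := fun x => ∑ t ∈ (range T).filter (fun t => z ∈ B t),
      (if x ∈ B t then (η t)^2 * ∑ j, ∑ k, g t z j * H t j k * g t x k else 0) with hf
  have hmarg : ∀ S ⊆ D \ {z},
      (∑ t ∈ range T,
        (-(η t) * ∑ x ∈ (S ∪ {z}) ∩ B t, ∑ i, gval t i * g t x i
          + (η t)^2 / 2 *
            ∑ j, ∑ k, (∑ x ∈ (S ∪ {z}) ∩ B t, g t x j) * H t j k
              * (∑ x ∈ (S ∪ {z}) ∩ B t, g t x k)))
      - (∑ t ∈ range T,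
        (-(η t) * ∑ x ∈ S ∩ B t, ∑ i, gval t i * g t x i
          + (η t)^2 / 2 *
            ∑ j, ∑ k, (∑ x ∈ S ∩ B t, g t x j) * H t j k * (∑ x ∈ S ∩ B t, g t x k)))
      = c + ∑ x ∈ S, f x := by
    intro S hS
    have hzS : z ∉ S := fun h => (Finset.mem_sdiff.1 (hS h)).2 (mem_singleton_self z)
    rw [← Finset.sum_sub_distrib]
    rw [hf]
    rw [Finset.sum_comm]
    rw [hc, ← Finset.sum_add_distrib]
    rw [Finset.sum_filter]
    refine Finset.sum_congr rfl fun t _ => ?_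
    by_cases hzB : z ∈ B t
    · simp only [if_pos hzB]
      have hint : (S ∪ {z}) ∩ B t = insert z (S ∩ B t) := by
        ext y
        simp only [Finset.mem_inter, Finset.mem_union, Finset.mem_singleton,
          Finset.mem_insert]
        constructor
        · rintro ⟨h1 | rfl, h2⟩
          · exact Or.inr ⟨h1, h2⟩
          · exact Or.inl rfl
        · rintro (rfl | ⟨h1, h2⟩)
          · exact ⟨Or.inr rfl, hzB⟩
          · exact ⟨Or.inl h1, h2⟩
      have hzSB : z ∉ S ∩ B t := fun h => hzS (Finset.mem_inter.1 h).1
      rw [hint]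
      simp only [Finset.sum_insert hzSB]
      rw [quad_expand d (H t) (hH t) (g t z) (fun k => ∑ x ∈ S ∩ B t, g t x k)]
      rw [BL_sum d (H t) (g t z) (S ∩ B t) (g t)]
      rw [show (∑ x ∈ S, if x ∈ B t then (η t)^2 * ∑ j, ∑ k, g t z j * H t j k * g t x k else 0)
          = ∑ x ∈ S ∩ B t, (η t)^2 * ∑ j, ∑ k, g t z j * H t j k * g t x k from
        Finset.sum_ite_mem S (B t) _]
      have hxx : ∑ x ∈ S ∩ B t, (η t)^2 * ∑ j, ∑ k, g t z j * H t j k * g t x k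
          = (η t)^2 * ∑ x ∈ S ∩ B t, ∑ j, ∑ k, g t z j * H t j k * g t x k :=
        (Finset.mul_sum _ _ _).symm
      rw [hxx]
      ring
    · have hint : (S ∪ {z}) ∩ B t = S ∩ B t := by
        ext y
        simp only [Finset.mem_inter, Finset.mem_union, Finset.mem_singleton]
        constructor
        · rintro ⟨h1 | rfl, h2⟩
          · exact ⟨h1, h2⟩
          · exact absurd h2 hzB
        · rintro ⟨h1, h2⟩; exact ⟨Or.inl h1, h2⟩
      rw [hint, if_neg hzB]
      ring
  rw [shapley_master D z hz _ c f hmarg]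
  rw [hf]
  rw [Finset.sum_comm]
  have hsum : ∀ t ∈ (range T).filter (fun t => z ∈ B t),
      (∑ x ∈ D \ {z}, if x ∈ B t then (η t)^2 * ∑ j, ∑ k, g t z j * H t j k * g t x k else 0)
      = (η t)^2 * ((∑ j, ∑ k, g t z j * H t j k * (∑ x ∈ B t, g t x k))
          - ∑ j, ∑ k, g t z j * H t j k * g t z k) := by
    intro t ht
    obtain ⟨ht1, hzB⟩ := Finset.mem_filter.1 ht
    have hBD : B t ⊆ D := hB t (mem_range.1 ht1)
    rw [Finset.sum_ite_mem]
    have hDz : (D \ {z}) ∩ B t = (B t).erase z := by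
      ext y
      simp only [Finset.mem_inter, Finset.mem_sdiff, Finset.mem_singleton, Finset.mem_erase]
      constructor
      · rintro ⟨⟨h1, h2⟩, h3⟩; exact ⟨h2, h3⟩
      · rintro ⟨h1, h2⟩; exact ⟨⟨hBD h2, h1⟩, h2⟩
    rw [hDz, ← Finset.mul_sum, ← BL_sum d (H t) (g t z) ((B t).erase z) (g t)]
    congr 1
    rw [← Finset.sum_sub_distrib]
    refine Finset.sum_congr rfl fun j _ => ?_
    rw [← Finset.sum_sub_distrib]
    refine Finset.sum_congr rfl fun k _ => ?_
    rw [Finset.sum_erase_eq_sub hzB]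
    ring
  rw [Finset.sum_congr rfl hsum, hc, Finset.sum_div, ← Finset.sum_add_distrib]
  refine Finset.sum_congr rfl fun t ht => ?_
  ring
end

section
/- Let D be a finite set of N players, let B be a batch with B ⊆ D, let η ∈ ℝ, let g : B → ℝ^d and g^val ∈ ℝ^d be vectors, and let H be a symmetric d×d real matrix. Define the second-order term utility U_{(2)}(S) := η² (Σ_{z ∈ S} g(z))ᵀ H (Σ_{z ∈ S} g(z)) for S ⊆ B. Then for every z ∈ B, the Shapley value computed over the player set B satisfies φ_z(U_{(2)}) = η² g(z)ᵀ H ( Σ_{z_j ∈ B} g(z_j) ). -/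
open Finset

/-! For the utility `S ↦ Q(Σ_{x ∈ S} g x, Σ_{x ∈ S} g x)` with `Q` a symmetric bilinear form, the
marginal contribution of `z` to a coalition `S` is `Q(g z, g z) + 2 Q(g z, Σ_{x ∈ S} g x)`, affine
in the members of `S`. Averaged with the Shapley weights, an `m`-element coalition drawn from the
`n` other players contains a given player with probability `m / n`, and `m / n`
averages to `1/2` over `m = 0, …, n`; hence
`φ_z = Q(g z, g z) + Q(g z, Σ_{x ≠ z} g x) = Q(g z, Σ_x g x)`. -/

theorem Finset.sum_range_succ_natCast {K : Type*} [Field K] [CharZero K] (n : ℕ) :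
    ∑ m ∈ range (n + 1), (m : K) = n * (n + 1) / 2 := by
  have h := congrArg (Nat.cast : ℕ → K) (sum_range_id_mul_two (n + 1))
  push_cast at h
  rw [eq_div_iff two_ne_zero, h]
  ring

section

variable {α : Type*} [DecidableEq α]

theorem Finset.sum_powersetCard_succ_sum {M : Type*} [AddCommMonoid M] (A : Finset α) (m : ℕ)
    (f : α → M) :
    ∑ S ∈ A.powersetCard (m + 1), ∑ x ∈ S, f x = (#A - 1).choose m • ∑ x ∈ A, f x := by
  rw [sum_comm' (t' := A) (s' := fun x => {S ∈ A.powersetCard (m + 1) | {x} ⊆ S}), smul_sum]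
  · refine sum_congr rfl fun x hx => ?_
    rw [sum_const, card_filter_powersetCard_subset _ _ _ (singleton_subset_iff.2 hx) (by simp)]
    simp
  · intro S x
    simp only [mem_filter, mem_powersetCard, singleton_subset_iff]
    grind

theorem Finset.inv_choose_mul_sum_powersetCard_sum {K : Type*} [Field K] [CharZero K]
    (A : Finset α) {m : ℕ} (hm : m ≤ #A) (f : α → K) :
    ((#A).choose m : K)⁻¹ * ∑ S ∈ A.powersetCard m, ∑ x ∈ S, f x = m / #A * ∑ x ∈ A, f x := by
  obtain _ | m := m
  · simp
  obtain ⟨n, hn⟩ : ∃ n, #A = n + 1 := ⟨#A - 1, by omega⟩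
  have hchoose : ((n + 1 : ℕ) : K) * n.choose m = (n + 1).choose (m + 1) * (m + 1 : ℕ) := by
    exact_mod_cast Nat.add_one_mul_choose_eq n m
  have hpos : ((n + 1).choose (m + 1) : K) ≠ 0 := by
    exact_mod_cast (Nat.choose_pos (hn ▸ hm)).ne'
  rw [sum_powersetCard_succ_sum, hn, Nat.add_sub_cancel, nsmul_eq_mul]
  field_simp
  push_cast at hchoose ⊢
  linear_combination (∑ x ∈ A, f x) * hchoose

theorem shapley_eq_add_half_sum_of_marginal_eq {D : Finset α} {U : Finset α → ℝ} {z : α}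
    (hz : z ∈ D) (c : ℝ) (f : α → ℝ)
    (hU : ∀ S ⊆ D \ {z}, U (S ∪ {z}) - U S = c + ∑ x ∈ S, f x) :
    shapley D U z = c + (∑ x ∈ D \ {z}, f x) / 2 := by
  set A := D \ {z}
  set F := ∑ x ∈ A, f x
  obtain ⟨n, hn⟩ : ∃ n, #D = n + 1 := ⟨#D - 1, by have := card_pos.2 ⟨z, hz⟩; omega⟩
  have hA : #A = n := by rw [card_sdiff_of_subset (singleton_subset_iff.2 hz), hn]; simp
  have hlayer : ∀ m ∈ range (n + 1),
      (n.choose m : ℝ)⁻¹ * ∑ S ∈ A.powersetCard m, (U (S ∪ {z}) - U S) = c + m / n * F := by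
    intro m hm
    have hm : m ≤ #A := hA ▸ Nat.lt_succ_iff.1 (mem_range.1 hm)
    have hchoose : (n.choose m : ℝ) ≠ 0 := by exact_mod_cast (Nat.choose_pos (hA ▸ hm)).ne'
    rw [sum_congr rfl fun S hS => hU S (mem_powersetCard.1 hS).1, sum_add_distrib, mul_add,
      ← hA, inv_choose_mul_sum_powersetCard_sum A hm, sum_const, card_powersetCard, nsmul_eq_mul,
      inv_mul_cancel_left₀ (hA ▸ hchoose)]
  rw [shapley, hn, Nat.add_sub_cancel, ← Ico_add_one_right_eq_Icc, sum_Ico_eq_sum_range]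
  simp only [add_tsub_cancel_left, Nat.add_sub_cancel]
  rw [sum_congr rfl hlayer, sum_add_distrib, ← sum_mul, ← sum_div, sum_range_succ_natCast,
    sum_const, card_range, nsmul_eq_mul]
  rcases eq_or_ne n 0 with rfl | hn0
  · simp [F, card_eq_zero.1 hA]
  · field_simp
    push_cast
    ring

theorem shapley_bilinForm_sum {M : Type*} [AddCommGroup M] [Module ℝ M]
    {Q : LinearMap.BilinForm ℝ M} (hQ : Q.IsSymm) {D : Finset α} {z : α} (hz : z ∈ D)
    (g : α → M) :
    shapley D (fun S => Q (∑ x ∈ S, g x) (∑ x ∈ S, g x)) z = Q (g z) (∑ x ∈ D, g x) := by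
  rw [shapley_eq_add_half_sum_of_marginal_eq hz (Q (g z) (g z)) (fun x => 2 * Q (g z) (g x))]
  · rw [← add_sum_erase D g hz, map_add, sdiff_singleton_eq_erase, ← mul_sum, ← map_sum]
    ring
  · intro S hS
    have hzS : z ∉ S := fun h => by simpa using hS h
    rw [union_singleton, sum_insert hzS, ← mul_sum, ← map_sum]
    simp only [map_add, LinearMap.add_apply]
    rw [hQ.eq (∑ x ∈ S, g x) (g z)]
    ring

end

theorem shapley_secondOrder_term_general {α : Type*} [DecidableEq α]
    (B : Finset α) (η : ℝ) (d : ℕ)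
    (g : α → Fin d → ℝ)
    (H : Matrix (Fin d) (Fin d) ℝ) (hH : H.IsSymm)
    (z : α) (hz : z ∈ B) :
    shapley B
      (fun S => η ^ 2 *
        ∑ j, ∑ k, (∑ x ∈ S, g x j) * H j k * (∑ x ∈ S, g x k)) z
    = η ^ 2 * ∑ j, ∑ k, g z j * H j k * (∑ x ∈ B, g x k) := by
  have hQ : (η ^ 2 • H.toBilin').IsSymm := (Matrix.isSymm_toBilin'_iff_isSymm.2 hH).smul _
  simpa only [LinearMap.smul_apply, Matrix.toBilin'_apply, Finset.sum_apply, smul_eq_mul] using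
    shapley_bilinForm_sum hQ hz g

/-- **Shapley value of the second-order Taylor term** (key lemma of Appendix C).
For the utility `U_{(2)}(S) = η² (Σ_{x ∈ S} g(x))ᵀ H (Σ_{x ∈ S} g(x))` on subsets of the
batch `B`, with `H` symmetric, the Shapley value over the player set `B` of any `z ∈ B`
is `η² g(z)ᵀ H (Σ_{x ∈ B} g(x))`. -/
theorem shapley_secondOrder_term {α : Type*} [DecidableEq α]
    (D B : Finset α) (hBD : B ⊆ D) (η : ℝ) (d : ℕ)
    (g : α → Fin d → ℝ) (gval : Fin d → ℝ)
    (H : Matrix (Fin d) (Fin d) ℝ) (hH : H.IsSymm)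
    (z : α) (hz : z ∈ B) :
    shapley B
      (fun S => η ^ 2 *
        ∑ j, ∑ k, (∑ x ∈ S, g x j) * H j k * (∑ x ∈ S, g x k)) z
    = η ^ 2 * ∑ j, ∑ k, g z j * H j k * (∑ x ∈ B, g x k) :=
  shapley_secondOrder_term_general B η d g H hH z hz
end
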